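/- (No crossing of replica-symmetric Sherrington–Kirkpatrick characteristics.) Let b ∈ ℝ, t ≥ 0, and let I ⊆ (0,∞) be an interval such that for all x₀ ∈ I one has t · E_g[ cosh^{−4}( b + g √x₀ ) ] ≤ 1/3 + (2/3) · t · E_g[ cosh^{−2}( b + g √x₀ ) ]. Then the map f(x₀) = x₀ − t · E_g[ tanh²( b + g √x₀ ) ] is nondecreasing on I; in particular the replica-symmetric characteristic trajectories x = x₀ − t · E_g[ tanh²( b + g √x₀ ) ] starting from distinct points of I do not intersect at time t. -/

import Mathlib

/-!
Gaussian integration by parts, `E[g h(g)] = E[h'(g)]`, turns the derivative of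
`x ↦ E[φ(b + g√x)]` into `E[φ''(b + g√x)] / 2` (the heat equation). For `φ = tanh²`,
`φ'' = 2 sech² (3 sech² - 2)`, so `x₀ ↦ x₀ - t E[tanh²(b + g√x₀)]` has derivative
`1 - t (3 E[sech⁴] - 2 E[sech²])`, which is nonnegative on `I` exactly by the hypothesis.
-/

open Real MeasureTheory ProbabilityTheory
open scoped NNReal

namespace ProbabilityTheory

variable {μ : ℝ} {v : ℝ≥0}

lemma hasDerivAt_gaussianPDFReal (μ : ℝ) (v : ℝ≥0) (x : ℝ) :
    HasDerivAt (gaussianPDFReal μ v) (-((x - μ) / v) * gaussianPDFReal μ v x) x := by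
  have hexp : HasDerivAt (fun y => -(y - μ) ^ 2 / (2 * v)) (-((x - μ) / v)) x := by
    have := (((hasDerivAt_id x).sub_const μ).pow 2).neg.div_const (2 * (v : ℝ))
    refine this.congr_deriv ?_
    simp only [id, Nat.cast_ofNat]
    ring
  rw [gaussianPDFReal_def]
  exact (hexp.exp.const_mul _).congr_deriv (by ring)

lemma integrable_gaussianReal_iff {f : ℝ → ℝ} (hv : v ≠ 0) :
    Integrable f (gaussianReal μ v) ↔ Integrable (fun x => gaussianPDFReal μ v x * f x) := by
  rw [gaussianReal_of_var_ne_zero _ hv, gaussianPDF_def,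
    integrable_withDensity_iff_integrable_smul' (measurable_gaussianPDFReal μ v).ennreal_ofReal
      (ae_of_all _ fun _ => ENNReal.ofReal_lt_top)]
  simp only [ENNReal.toReal_ofReal (gaussianPDFReal_nonneg μ v _), smul_eq_mul]

theorem integral_sub_mul_eq_var_mul_integral_deriv {h h' : ℝ → ℝ}
    (hh : ∀ x, HasDerivAt h (h' x) x) {C : ℝ} (hC : ∀ x, ‖h x‖ ≤ C)
    (hh' : Integrable h' (gaussianReal μ v)) :
    ∫ x, (x - μ) * h x ∂gaussianReal μ v = v * ∫ x, h' x ∂gaussianReal μ v := by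
  by_cases hv : v = 0
  · simp [hv]
  have h_meas : AEStronglyMeasurable h :=
    (continuous_iff_continuousAt.2 fun x => (hh x).continuousAt).aestronglyMeasurable
  have h_bdd : ∀ᵐ x ∂volume, ‖h x‖ ≤ C := ae_of_all _ hC
  have h_sub : Integrable (fun x => gaussianPDFReal μ v x * (x - μ)) := by
    rw [← integrable_gaussianReal_iff hv]
    exact ((memLp_id_gaussianReal 1).integrable le_rfl).sub (integrable_const μ)
  have h_ibp := integral_mul_deriv_eq_deriv_mul_of_integrable (fun x _ => hh x)
    (fun x _ => hasDerivAt_gaussianPDFReal μ v x)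
    (((h_sub.const_mul (-(v : ℝ)⁻¹)).bdd_mul h_meas h_bdd).congr
      (ae_of_all _ fun x => by simp only [Pi.mul_apply]; ring))
    (((integrable_gaussianReal_iff hv).1 hh').congr (ae_of_all _ fun x => mul_comm _ _))
    ((integrable_gaussianPDFReal μ v).bdd_mul h_meas h_bdd)
  simp only [integral_gaussianReal_eq_integral_smul hv, smul_eq_mul]
  calc ∫ x, gaussianPDFReal μ v x * ((x - μ) * h x)
      = -v * ∫ x, h x * (-((x - μ) / v) * gaussianPDFReal μ v x) := by
        rw [← integral_const_mul]
        congr 1 with x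
        field_simp
    _ = v * ∫ x, gaussianPDFReal μ v x * h' x := by
        rw [h_ibp]
        simp only [mul_comm (h' _)]
        ring

theorem integral_mul_comp_add_mul_eq {f f' : ℝ → ℝ} (hf : ∀ u, HasDerivAt f (f' u) u)
    {C₁ C₂ : ℝ} (hC₁ : ∀ u, ‖f u‖ ≤ C₁) (hC₂ : ∀ u, ‖f' u‖ ≤ C₂) (b c : ℝ) :
    ∫ g, g * f (b + g * c) ∂gaussianReal 0 1 = c * ∫ g, f' (b + g * c) ∂gaussianReal 0 1 := by
  have hf'_meas : Measurable f' := by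
    rw [show f' = deriv f from funext fun u => (hf u).deriv.symm]
    exact measurable_deriv f
  have h_stein := integral_sub_mul_eq_var_mul_integral_deriv (μ := 0) (v := 1)
    (h := fun g => f (b + g * c)) (h' := fun g => f' (b + g * c) * c)
    (fun g => (hf _).comp g ((hasDerivAt_mul_const c).const_add b))
    (fun g => hC₁ _)
    ((Integrable.of_bound (hf'_meas.comp (by fun_prop)).aestronglyMeasurable C₂
      (ae_of_all _ fun g => hC₂ _)).mul_const c)
  simpa [integral_mul_const, mul_comm c] using h_stein

theorem hasDerivAt_integral_comp_add_mul_sqrt {φ φ' φ'' : ℝ → ℝ}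
    (hφ : ∀ u, HasDerivAt φ (φ' u) u) (hφ' : ∀ u, HasDerivAt φ' (φ'' u) u)
    {C₀ C₁ C₂ : ℝ} (hC₀ : ∀ u, ‖φ u‖ ≤ C₀) (hC₁ : ∀ u, ‖φ' u‖ ≤ C₁) (hC₂ : ∀ u, ‖φ'' u‖ ≤ C₂)
    (b : ℝ) {x : ℝ} (hx : 0 < x) :
    HasDerivAt (fun y => ∫ g, φ (b + g * √y) ∂gaussianReal 0 1)
      ((∫ g, φ'' (b + g * √x) ∂gaussianReal 0 1) / 2) x := by
  have hφc : Continuous φ := continuous_iff_continuousAt.2 fun u => (hφ u).continuousAt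
  have hφ'c : Continuous φ' := continuous_iff_continuousAt.2 fun u => (hφ' u).continuousAt
  have h_abs : Integrable (fun g : ℝ => |g|) (gaussianReal 0 1) :=
    ((memLp_id_gaussianReal 1).integrable le_rfl).abs
  have hsx2 : 0 < √(x / 2) := Real.sqrt_pos.2 (by positivity)
  have h_diff := hasDerivAt_integral_of_dominated_loc_of_deriv_le
    (F := fun y g => φ (b + g * √y)) (F' := fun y g => φ' (b + g * √y) * (g * (1 / (2 * √y))))
    (bound := fun g => C₁ / (2 * √(x / 2)) * |g|) (Ioi_mem_nhds (half_lt_self hx))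
    (.of_forall fun y => (by fun_prop : Continuous _).aestronglyMeasurable)
    (.of_bound (by fun_prop) C₀ (ae_of_all _ fun g => hC₀ _))
    (by fun_prop) ?bound (h_abs.const_mul _) ?deriv
  case bound =>
    refine ae_of_all _ fun g y (hy : x / 2 < y) => ?_
    have hsy : √(x / 2) ≤ √y := Real.sqrt_le_sqrt hy.le
    have hsy0 : 0 < √y := hsx2.trans_le hsy
    rw [norm_mul, Real.norm_eq_abs (g * _), abs_mul, abs_of_pos (by positivity : 0 < 1 / (2 * √y))]
    calc ‖φ' (b + g * √y)‖ * (|g| * (1 / (2 * √y))) ≤ C₁ * (|g| * (1 / (2 * √(x / 2)))) := by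
          gcongr
          · exact (norm_nonneg _).trans (hC₁ 0)
          · exact hC₁ _
      _ = C₁ / (2 * √(x / 2)) * |g| := by ring
  case deriv =>
    refine ae_of_all _ fun g y (hy : x / 2 < y) => ?_
    exact (hφ _).comp y (((Real.hasDerivAt_sqrt (by linarith)).const_mul g).const_add b)
  refine h_diff.2.congr_deriv ?_
  have hsx : √x ≠ 0 := (Real.sqrt_pos.2 hx).ne'
  calc ∫ g, φ' (b + g * √x) * (g * (1 / (2 * √x))) ∂gaussianReal 0 1
      = (2 * √x)⁻¹ * ∫ g, g * φ' (b + g * √x) ∂gaussianReal 0 1 := by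
        rw [← integral_const_mul]
        congr 1 with g
        ring
    _ = (∫ g, φ'' (b + g * √x) ∂gaussianReal 0 1) / 2 := by
        rw [integral_mul_comp_add_mul_eq hφ' hC₁ hC₂]
        field_simp

end ProbabilityTheory

namespace Real

theorem hasDerivAt_tanh (x : ℝ) : HasDerivAt tanh (1 - tanh x ^ 2) x := by
  have hc := (cosh_pos x).ne'
  have h := (hasDerivAt_sinh x).div (hasDerivAt_cosh x) hc
  rw [show tanh = fun y => sinh y / cosh y from funext fun y => tanh_eq_sinh_div_cosh y]
  refine h.congr_deriv ?_
  field_simp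

theorem one_sub_tanh_sq (x : ℝ) : 1 - tanh x ^ 2 = (cosh x ^ 2)⁻¹ := by
  have hc := (cosh_pos x).ne'
  rw [tanh_eq_sinh_div_cosh]
  field_simp
  linear_combination cosh_sq_sub_sinh_sq x

theorem hasDerivAt_tanh_sq (u : ℝ) :
    HasDerivAt (fun u => tanh u ^ 2) (2 * tanh u * (1 - tanh u ^ 2)) u :=
  ((hasDerivAt_tanh u).fun_pow 2).congr_deriv (by ring)

theorem hasDerivAt_two_mul_tanh_mul_one_sub_tanh_sq (u : ℝ) :
    HasDerivAt (fun u => 2 * tanh u * (1 - tanh u ^ 2))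
      (2 * (1 - tanh u ^ 2) * (1 - 3 * tanh u ^ 2)) u := by
  have h := ((hasDerivAt_tanh u).const_mul 2).mul ((hasDerivAt_tanh_sq u).const_sub 1)
  exact h.congr_deriv (by ring)

end Real

theorem integrable_inv_cosh_pow_comp {α : Type*} [MeasurableSpace α] {μ : Measure α}
    [IsFiniteMeasure μ] {f : α → ℝ} (hf : Measurable f) (n : ℕ) :
    Integrable (fun a => (cosh (f a) ^ n)⁻¹) μ := by
  refine .of_bound (by fun_prop) 1 (ae_of_all _ fun a => ?_)
  rw [Real.norm_of_nonneg (by positivity)]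
  exact inv_le_one_of_one_le₀ (one_le_pow₀ (one_le_cosh _))

theorem hasDerivAt_integral_tanh_sq (b : ℝ) {x : ℝ} (hx : 0 < x) :
    HasDerivAt (fun y => ∫ g, tanh (b + g * √y) ^ 2 ∂gaussianReal 0 1)
      (3 * ∫ g, (cosh (b + g * √x) ^ 4)⁻¹ ∂gaussianReal 0 1
        - 2 * ∫ g, (cosh (b + g * √x) ^ 2)⁻¹ ∂gaussianReal 0 1) x := by
  refine (hasDerivAt_integral_comp_add_mul_sqrt hasDerivAt_tanh_sq
    hasDerivAt_two_mul_tanh_mul_one_sub_tanh_sq (C₀ := 1) (C₁ := 2) (C₂ := 4)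
    (fun u => ?_) (fun u => ?_) (fun u => ?_) b hx).congr_deriv ?_
  · rw [Real.norm_of_nonneg (sq_nonneg _)]
    exact (tanh_sq_lt_one u).le
  · have := neg_one_lt_tanh u
    have := tanh_lt_one u
    rw [Real.norm_eq_abs, abs_le]
    constructor <;> nlinarith [sq_nonneg (tanh u - 1), sq_nonneg (tanh u + 1)]
  · have h_lt := tanh_sq_lt_one u
    have h_nonneg := sq_nonneg (tanh u)
    rw [Real.norm_eq_abs, abs_le]
    constructor <;> nlinarith [mul_nonneg h_nonneg (sub_nonneg.2 h_lt.le)]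
  · have h_meas : Measurable fun g : ℝ => b + g * √x := by fun_prop
    rw [← integral_const_mul, ← integral_const_mul,
      ← integral_sub ((integrable_inv_cosh_pow_comp h_meas 4).const_mul 3)
        ((integrable_inv_cosh_pow_comp h_meas 2).const_mul 2), ← integral_div]
    congr 1 with g
    rw [show cosh (b + g * √x) ^ 4 = (cosh (b + g * √x) ^ 2) ^ 2 by ring, ← inv_pow,
      ← one_sub_tanh_sq]
    ring

theorem sk_rs_characteristics_no_crossing_general (b t : ℝ)
    (I : Set ℝ) (hI : I ⊆ Set.Ioi 0) (hconn : I.OrdConnected)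
    (hcond : ∀ x₀ ∈ I,
      t * ∫ g : ℝ, ((Real.cosh (b + g * Real.sqrt x₀)) ^ 4)⁻¹ ∂(gaussianReal 0 1)
        ≤ 1 / 3 +
          (2 / 3) * t *
            ∫ g : ℝ, ((Real.cosh (b + g * Real.sqrt x₀)) ^ 2)⁻¹ ∂(gaussianReal 0 1)) :
    MonotoneOn
      (fun x₀ : ℝ =>
        x₀ - t * ∫ g : ℝ, (Real.tanh (b + g * Real.sqrt x₀)) ^ 2 ∂(gaussianReal 0 1))
      I := by
  have h_deriv : ∀ x ∈ I, HasDerivAt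
      (fun x₀ : ℝ => x₀ - t * ∫ g : ℝ, tanh (b + g * √x₀) ^ 2 ∂gaussianReal 0 1)
      (1 - t * (3 * ∫ g, (cosh (b + g * √x) ^ 4)⁻¹ ∂gaussianReal 0 1
        - 2 * ∫ g, (cosh (b + g * √x) ^ 2)⁻¹ ∂gaussianReal 0 1)) x := fun x hx =>
    (hasDerivAt_id x).sub ((hasDerivAt_integral_tanh_sq b (hI hx)).const_mul t)
  refine monotoneOn_of_hasDerivWithinAt_nonneg hconn.convex
    (fun x hx => (h_deriv x hx).continuousAt.continuousWithinAt)
    (fun x hx => (h_deriv x (interior_subset hx)).hasDerivWithinAt) fun x hx => ?_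
  linarith [hcond x (interior_subset hx)]

/-- **No crossing of replica-symmetric Sherrington–Kirkpatrick characteristics.**
Let `b ∈ ℝ`, `t ≥ 0`, and let `I ⊆ (0, ∞)` be an interval on which
`t E_g[cosh⁻⁴(b + g√x₀)] ≤ 1/3 + (2/3) t E_g[cosh⁻²(b + g√x₀)]` (expectations over a
standard Gaussian `g`).  Then `f(x₀) = x₀ - t E_g[tanh²(b + g√x₀)]` is nondecreasing
on `I`; in particular the replica-symmetric characteristics starting from distinct
points of `I` do not intersect at time `t`. -/
theorem sk_rs_characteristics_no_crossing (b t : ℝ) (ht : 0 ≤ t)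
    (I : Set ℝ) (hI : I ⊆ Set.Ioi 0) (hconn : I.OrdConnected)
    (hcond : ∀ x₀ ∈ I,
      t * ∫ g : ℝ, ((Real.cosh (b + g * Real.sqrt x₀)) ^ 4)⁻¹ ∂(gaussianReal 0 1)
        ≤ 1 / 3 +
          (2 / 3) * t *
            ∫ g : ℝ, ((Real.cosh (b + g * Real.sqrt x₀)) ^ 2)⁻¹ ∂(gaussianReal 0 1)) :
    MonotoneOn
      (fun x₀ : ℝ =>
        x₀ - t * ∫ g : ℝ, (Real.tanh (b + g * Real.sqrt x₀)) ^ 2 ∂(gaussianReal 0 1))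
      I :=
  sk_rs_characteristics_no_crossing_general b t I hI hconn hcond
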